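/- arXiv:1301.2663 — 5 statements merged into one kernel-verified Lean document; each statement's English description precedes it below -/
import Mathlib

section
/- Let A be a finite set of cardinality A ≥ 1, and consider vectors z, V with z ∈ [0,1] and V ∈ [0,1]^A. Define C = {(z,V) ∈ [0,1] × [0,1]^A : z ≥ max_a V_a}. Then C is closed and convex, and for every (z,V) ∈ [0,1]×[0,1]^A, d_C(z,V) ≤ (max_a V_a − z)⁺ ≤ √2 · d_C(z,V), where d_C is the Euclidean distance to C and x⁺ = max(x,0). -/
open Metric

/-- The set `C = {(z,V) ∈ [0,1] × [0,1]^A : z ≥ max_a V_a}` is closed and convex, and for every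
`(z,V) ∈ [0,1] × [0,1]^A`, the Euclidean distance to `C` is within a factor `√2` of the
positive part `(max_a V_a − z)⁺` of the sup-norm of the regret. -/
theorem regret_distance_equivalence (A : ℕ) (hA : 1 ≤ A) :
    let E := WithLp 2 (ℝ × EuclideanSpace ℝ (Fin A))
    let C : Set E := {p | p.ofLp.1 ∈ Set.Icc (0:ℝ) 1 ∧ (∀ a, p.ofLp.2 a ∈ Set.Icc (0:ℝ) 1) ∧
      ∀ a, p.ofLp.2 a ≤ p.ofLp.1}
    IsClosed C ∧ Convex ℝ C ∧
      ∀ p : E, p.ofLp.1 ∈ Set.Icc (0:ℝ) 1 → (∀ a, p.ofLp.2 a ∈ Set.Icc (0:ℝ) 1) →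
        infDist p C ≤
            max (Finset.univ.sup' ⟨⟨0, hA⟩, Finset.mem_univ _⟩ (fun a => p.ofLp.2 a) - p.ofLp.1) 0 ∧
          max (Finset.univ.sup' ⟨⟨0, hA⟩, Finset.mem_univ _⟩ (fun a => p.ofLp.2 a) - p.ofLp.1) 0 ≤
            Real.sqrt 2 * infDist p C := by
  intro E C
  have hne : (Finset.univ : Finset (Fin A)).Nonempty := ⟨⟨0, hA⟩, Finset.mem_univ _⟩
  have heq : Continuous (WithLp.equiv 2 (ℝ × EuclideanSpace ℝ (Fin A))) :=
    WithLp.prod_continuous_ofLp _ _ _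
  have hc1 : Continuous fun p : E => p.ofLp.1 := heq.fst
  have hc2 : ∀ a : Fin A, Continuous fun p : E => p.ofLp.2 a := fun a =>
    ((EuclideanSpace.proj a).continuous).comp heq.snd
  have hclosed : IsClosed C := by
    have h1 : IsClosed {p : E | p.ofLp.1 ∈ Set.Icc (0:ℝ) 1} := isClosed_Icc.preimage hc1
    have h2 : IsClosed {p : E | ∀ a, p.ofLp.2 a ∈ Set.Icc (0:ℝ) 1} := by
      rw [Set.setOf_forall]
      exact isClosed_iInter fun a => isClosed_Icc.preimage (hc2 a)
    have h3 : IsClosed {p : E | ∀ a, p.ofLp.2 a ≤ p.ofLp.1} := by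
      rw [Set.setOf_forall]
      exact isClosed_iInter fun a => isClosed_le (hc2 a) hc1
    exact h1.inter (h2.inter h3)
  have hconv : Convex ℝ C := by
    rintro x ⟨hx1, hx2, hx3⟩ y ⟨hy1, hy2, hy3⟩ a b ha hb hab
    have hfst : (a • x + b • y).ofLp.1 = a * x.ofLp.1 + b * y.ofLp.1 := rfl
    have hsnd : ∀ i, (a • x + b • y).ofLp.2 i = a * x.ofLp.2 i + b * y.ofLp.2 i := fun i => rfl
    refine ⟨?_, fun i => ?_, fun i => ?_⟩
    · rw [Set.mem_Icc] at *
      constructor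
      · rw [hfst]; nlinarith [hx1.1, hy1.1]
      · rw [hfst]; nlinarith [hx1.2, hy1.2]
    · rw [hsnd i, Set.mem_Icc]
      have h1 := (hx2 i); have h2 := (hy2 i)
      rw [Set.mem_Icc] at h1 h2
      constructor
      · nlinarith [h1.1, h2.1]
      · nlinarith [h1.2, h2.2]
    · rw [hsnd i, hfst]
      have h1 := hx3 i; have h2 := hy3 i
      nlinarith
  refine ⟨hclosed, hconv, ?_⟩
  intro p hp1 hp2
  set M := Finset.univ.sup' hne (fun a => p.ofLp.2 a) with hM
  set r := max (M - p.ofLp.1) 0 with hr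
  have hM1 : M ≤ 1 := Finset.sup'_le _ _ fun a _ => (hp2 a).2
  -- the candidate projection point
  set q : E := (WithLp.equiv 2 (ℝ × EuclideanSpace ℝ (Fin A))).symm (max p.ofLp.1 M, p.ofLp.2) with hqdef
  have hq1 : q.ofLp.1 = max p.ofLp.1 M := rfl
  have hq2 : q.ofLp.2 = p.ofLp.2 := rfl
  have hqC : q ∈ C := by
    refine ⟨⟨le_trans hp1.1 (le_max_left _ _), max_le hp1.2 hM1⟩, fun a => hp2 a, fun a => ?_⟩
    exact le_trans (Finset.le_sup' (fun a => p.ofLp.2 a) (Finset.mem_univ a)) (le_max_right _ _)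
  have hdistpq : dist p q = r := by
    rw [WithLp.prod_dist_eq_of_L2, ← WithLp.ofLp_fst, ← WithLp.ofLp_snd, ← WithLp.ofLp_fst, ← WithLp.ofLp_snd]
    have h2 : dist p.ofLp.2 q.ofLp.2 = 0 := by rw [hq2, dist_self]
    rw [h2, hq1]
    have : dist p.ofLp.1 (max p.ofLp.1 M) = r := by
      rw [Real.dist_eq, hr]
      rcases le_total M p.ofLp.1 with h | h
      · rw [max_eq_left h, max_eq_right (by linarith), sub_self, abs_zero]
      · rw [max_eq_right h, max_eq_left (by linarith), abs_sub_comm,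
          abs_of_nonneg (by linarith)]
    rw [this]
    rw [zero_pow (by norm_num), add_zero, Real.sqrt_sq (le_max_right _ _)]
  have hCne : C.Nonempty := ⟨q, hqC⟩
  have upper : infDist p C ≤ r := hdistpq ▸ infDist_le_dist_of_mem hqC
  refine ⟨upper, ?_⟩
  -- lower bound : r ≤ √2 * infDist
  obtain ⟨astar, -, hastar⟩ := Finset.exists_mem_eq_sup' hne (fun a => p.ofLp.2 a)
  have key : ∀ w ∈ C, r ≤ Real.sqrt 2 * dist p w := by
    intro w hw
    set d := dist p w with hd
    have hd0 : (0:ℝ) ≤ d := dist_nonneg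
    have hs2 : Real.sqrt 2 ^ 2 = 2 := Real.sq_sqrt (by norm_num)
    have hs0 : (0:ℝ) ≤ Real.sqrt 2 := Real.sqrt_nonneg 2
    have hd2 : d ^ 2 = dist p.ofLp.1 w.ofLp.1 ^ 2 + dist p.ofLp.2 w.ofLp.2 ^ 2 := by
      rw [hd, WithLp.prod_dist_eq_of_L2, ← WithLp.ofLp_fst, ← WithLp.ofLp_snd, ← WithLp.ofLp_fst, ← WithLp.ofLp_snd, Real.sq_sqrt (by positivity)]
    have hsnd2 : dist p.ofLp.2 w.ofLp.2 ^ 2 = ∑ i, dist (p.ofLp.2 i) (w.ofLp.2 i) ^ 2 := by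
      rw [EuclideanSpace.dist_eq, Real.sq_sqrt (by positivity)]
    have hterm : dist (p.ofLp.2 astar) (w.ofLp.2 astar) ^ 2 ≤ dist p.ofLp.2 w.ofLp.2 ^ 2 := by
      rw [hsnd2]
      exact Finset.single_le_sum (f := fun i => dist (p.ofLp.2 i) (w.ofLp.2 i) ^ 2)
        (fun i _ => by positivity) (Finset.mem_univ astar)
    have hsum : dist p.ofLp.1 w.ofLp.1 ^ 2 + dist (p.ofLp.2 astar) (w.ofLp.2 astar) ^ 2 ≤ d ^ 2 := by
      rw [hd2]; linarith
    set u := p.ofLp.1 - w.ofLp.1 with hu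
    set v := p.ofLp.2 astar - w.ofLp.2 astar with hv
    have hu2 : dist p.ofLp.1 w.ofLp.1 ^ 2 = u ^ 2 := by rw [Real.dist_eq, sq_abs]
    have hv2 : dist (p.ofLp.2 astar) (w.ofLp.2 astar) ^ 2 = v ^ 2 := by rw [Real.dist_eq, sq_abs]
    rw [hu2, hv2] at hsum
    have hwle : w.ofLp.2 astar ≤ w.ofLp.1 := hw.2.2 astar
    have hvu : v - u ≤ Real.sqrt 2 * d := by
      nlinarith [sq_nonneg (u + v), sq_nonneg (Real.sqrt 2 * d - (v - u)),
        sq_nonneg (Real.sqrt 2 * d + (v - u)), mul_nonneg hs0 hd0]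
    have hMa : M = p.ofLp.2 astar := hM.trans hastar
    rw [hr]
    rcases max_cases (M - p.ofLp.1) 0 with ⟨h1, h2⟩ | ⟨h1, h2⟩
    · rw [h1, hMa]
      simp only [hu, hv] at hvu
      linarith
    · rw [h1]
      exact mul_nonneg hs0 hd0
  have hs0 : (0:ℝ) < Real.sqrt 2 := Real.sqrt_pos.mpr (by norm_num)
  have hinf : r / Real.sqrt 2 ≤ infDist p C := by
    by_contra hcon
    push_neg at hcon
    obtain ⟨w, hw, hlt⟩ := (infDist_lt_iff hCne).mp hcon
    have hk := key w hw
    have : Real.sqrt 2 * dist p w < Real.sqrt 2 * (r / Real.sqrt 2) :=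
      mul_lt_mul_of_pos_left hlt hs0
    rw [mul_div_cancel₀ _ (ne_of_gt hs0)] at this
    linarith
  calc r = r / Real.sqrt 2 * Real.sqrt 2 := by
        field_simp
    _ ≤ infDist p C * Real.sqrt 2 := by
        apply mul_le_mul_of_nonneg_right hinf (Real.sqrt_nonneg 2)
    _ = Real.sqrt 2 * infDist p C := mul_comm _ _
end

section
/- Consider a repeated game where at each stage m the player selects an index via distribution x_m ∈ Δ(A) and Nature chooses U_m ∈ [0,1]^A, and the player updates by projected gradient ascent: x'_{m+1} = x_m + η·U_m, x_{m+1} = Π_{Δ(A)}(x'_{m+1}), with x_1 uniform. Then for every a ∈ A and every n: ∑_{m=1}^n (U_m^a − ⟨x_m, U_m⟩) ≤ 1/(2η) + η n A / 2. In particular the choice η = 1/√(nA) yields regret at most √(nA). -/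
open Finset
set_option maxHeartbeats 1000000

private lemma telesc (f : ℕ → ℝ) : ∀ N : ℕ, ∑ m ∈ Finset.Icc 1 N, (f m - f (m+1)) = f 1 - f (N+1) := by
  intro N
  induction N with
  | zero => simp
  | succ k ih => rw [Finset.sum_Icc_succ_top (by omega), ih]; ring


/-- Regret bound for projected gradient ascent on the simplex: starting from the uniform
distribution and updating `x_{m+1} = Π_{Δ(A)}(x_m + η U_m)`, for every action `a` and horizon
`n`, `∑_{m=1}^n (U_m^a − ⟨x_m, U_m⟩) ≤ 1/(2η) + η n |A| / 2`; in particular `η = 1/√(n|A|)`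
gives regret at most `√(n|A|)`. -/
theorem projected_gradient_regret {A : Type*} [Fintype A] [Nonempty A]
    (S : Set (EuclideanSpace ℝ A))
    (hS : S = {y : EuclideanSpace ℝ A | (∀ a, 0 ≤ y a) ∧ ∑ a, y a = 1})
    (η : ℝ) (hη : 0 < η)
    (U : ℕ → EuclideanSpace ℝ A) (hU : ∀ m a, U m a ∈ Set.Icc (0:ℝ) 1)
    (x : ℕ → EuclideanSpace ℝ A)
    (hx1 : ∀ a, x 1 a = 1 / (Fintype.card A : ℝ))
    (hxS : ∀ m, 1 ≤ m → x m ∈ S)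
    (hproj : ∀ m, 1 ≤ m →
      ∀ y ∈ S, dist (x m + η • U m) (x (m + 1)) ≤ dist (x m + η • U m) y) :
    ∀ n : ℕ, 1 ≤ n → ∀ a : A,
      (∑ m ∈ Finset.Icc 1 n, (U m a - (inner ℝ (x m) (U m) : ℝ)) ≤
          1 / (2 * η) + η * n * (Fintype.card A : ℝ) / 2) ∧
        (η = 1 / Real.sqrt (n * (Fintype.card A : ℝ)) →
          ∑ m ∈ Finset.Icc 1 n, (U m a - (inner ℝ (x m) (U m) : ℝ)) ≤
            Real.sqrt (n * (Fintype.card A : ℝ))) := by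
  classical
  intro n hn a
  set K : ℝ := (Fintype.card A : ℝ) with hKdef
  have hK : 0 < K := by
    have := Fintype.card_pos (α := A); positivity
  set c : EuclideanSpace ℝ A := EuclideanSpace.single a 1 with hc
  have hcS : c ∈ S := by
    rw [hS]
    refine ⟨fun b => ?_, ?_⟩
    · by_cases h : b = a <;> simp [hc, h]
    · simp [hc]
  have hconv : Convex ℝ S := by
    rw [hS]
    intro p hp q hq s t hs ht hst
    refine ⟨fun b => ?_, ?_⟩
    · have : (s • p + t • q) b = s * p b + t * q b := rfl
      rw [this]
      exact add_nonneg (mul_nonneg hs (hp.1 b)) (mul_nonneg ht (hq.1 b))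
    · have : ∀ b, (s • p + t • q) b = s * p b + t * q b := fun b => rfl
      simp only [this, Finset.sum_add_distrib, ← Finset.mul_sum, hp.2, hq.2, mul_one, hst]
  -- key step inequality
  have key : ∀ m, 1 ≤ m → (inner ℝ (U m) (c - x m) : ℝ) ≤
      (‖x m - c‖^2 - ‖x (m+1) - c‖^2) / (2*η) + η * K / 2 := by
    intro m hm
    set y := x m + η • U m with hy
    have hpS : x (m+1) ∈ S := hxS (m+1) (by omega)
    haveI : Nonempty S := ⟨⟨x (m+1), hpS⟩⟩
    have hmin : ‖y - x (m+1)‖ = ⨅ w : S, ‖y - w‖ := by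
      apply le_antisymm
      · exact le_ciInf fun w => by simpa [dist_eq_norm] using hproj m hm w w.2
      · have hbdd : BddBelow (Set.range fun w : S => ‖y - (w : EuclideanSpace ℝ A)‖) := by
          refine ⟨0, ?_⟩
          rintro r ⟨w, rfl⟩
          exact norm_nonneg _
        exact ciInf_le hbdd ⟨x (m+1), hpS⟩
    have hvar : (inner ℝ (y - x (m+1)) (c - x (m+1)) : ℝ) ≤ 0 :=
      (norm_eq_iInf_iff_real_inner_le_zero hconv hpS).mp hmin c hcS
    have hinner_pc : (inner ℝ (y - x (m+1)) (x (m+1) - c) : ℝ) ≥ 0 := by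
      have : x (m+1) - c = -(c - x (m+1)) := by abel
      rw [this, inner_neg_right]; linarith
    have expand1 : ‖y - c‖^2 = ‖y - x (m+1)‖^2
        + 2 * (inner ℝ (y - x (m+1)) (x (m+1) - c) : ℝ) + ‖x (m+1) - c‖^2 := by
      have h := norm_add_sq_real (y - x (m+1)) (x (m+1) - c)
      have h2 : (y - x (m+1)) + (x (m+1) - c) = y - c := by abel
      rw [h2] at h; linarith
    have h1 : ‖x (m+1) - c‖^2 ≤ ‖y - c‖^2 := by
      nlinarith [sq_nonneg ‖y - x (m+1)‖]
    have expand2 : ‖y - c‖^2 = ‖x m - c‖^2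
        + 2 * η * (inner ℝ (x m - c) (U m) : ℝ) + η^2 * ‖U m‖^2 := by
      have h := norm_add_sq_real (x m - c) (η • U m)
      have h2 : (x m - c) + η • U m = y - c := by rw [hy]; abel
      rw [h2, real_inner_smul_right, norm_smul] at h
      rw [h]
      simp [abs_of_pos hη]
      ring
    have hU2 : ‖U m‖^2 ≤ K := by
      have hn2 : ‖U m‖^2 = ∑ b, (U m b)^2 := by
        rw [EuclideanSpace.norm_eq, Real.sq_sqrt (by positivity)]
        simp [sq_abs]
      rw [hn2, hKdef]
      calc ∑ b, (U m b)^2 ≤ ∑ _b : A, (1:ℝ) :=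
            Finset.sum_le_sum fun b _ => by nlinarith [(hU m b).1, (hU m b).2]
        _ = (Fintype.card A : ℝ) := by simp
    have hflip : (inner ℝ (U m) (c - x m) : ℝ) = -(inner ℝ (x m - c) (U m) : ℝ) := by
      rw [real_inner_comm]
      have : c - x m = -(x m - c) := by abel
      rw [this, inner_neg_left]
    have main : 2*η*(inner ℝ (U m) (c - x m) : ℝ) ≤
        (‖x m - c‖^2 - ‖x (m+1) - c‖^2) + η^2 * K := by
      rw [hflip]
      nlinarith [sq_nonneg η]
    calc (inner ℝ (U m) (c - x m) : ℝ)
        = (2*η*(inner ℝ (U m) (c - x m) : ℝ)) / (2*η) := by field_simp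
      _ ≤ ((‖x m - c‖^2 - ‖x (m+1) - c‖^2) + η^2 * K) / (2*η) := by
          exact div_le_div_of_nonneg_right main (by positivity)
      _ = (‖x m - c‖^2 - ‖x (m+1) - c‖^2) / (2*η) + η * K / 2 := by
          field_simp
  -- identity between regret terms and inner products
  have hid : ∀ m : ℕ, U m a - (inner ℝ (x m) (U m) : ℝ) = (inner ℝ (U m) (c - x m) : ℝ) := by
    intro m
    rw [inner_sub_right, real_inner_comm (U m) (x m)]
    congr 1
    rw [hc]
    have := EuclideanSpace.inner_single_right (𝕜 := ℝ) a 1 (U m)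
    simpa using this.symm
  set f : ℕ → ℝ := fun m => ‖x m - c‖^2 with hf
  have hf1 : f 1 ≤ 1 := by
    have hx1n : ‖x 1‖^2 = 1/K := by
      rw [← real_inner_self_eq_norm_sq]
      simp only [PiLp.inner_apply, RCLike.inner_apply, conj_trivial, hx1]
      rw [Finset.sum_const, Finset.card_univ, nsmul_eq_mul, ← hKdef]
      field_simp
    have hx1c : (inner ℝ (x 1) c : ℝ) = 1/K := by
      rw [hc]
      have := EuclideanSpace.inner_single_right (𝕜 := ℝ) a 1 (x 1)
      simpa [hx1 a] using this
    have hcn : ‖c‖^2 = 1 := by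
      rw [hc, EuclideanSpace.norm_single]; norm_num
    have hexp : f 1 = ‖x 1‖^2 - 2*(inner ℝ (x 1) c : ℝ) + ‖c‖^2 := by
      rw [hf]
      have := norm_sub_sq_real (x 1) c
      simpa using this
    have hKinv : 0 < 1/K := by positivity
    rw [hexp, hx1n, hx1c, hcn]
    linarith
  have hfn : 0 ≤ f (n+1) := sq_nonneg _
  have part1 : ∑ m ∈ Finset.Icc 1 n, (U m a - (inner ℝ (x m) (U m) : ℝ)) ≤
      1 / (2 * η) + η * n * K / 2 := by
    calc ∑ m ∈ Finset.Icc 1 n, (U m a - (inner ℝ (x m) (U m) : ℝ))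
        = ∑ m ∈ Finset.Icc 1 n, (inner ℝ (U m) (c - x m) : ℝ) :=
          Finset.sum_congr rfl fun m _ => hid m
      _ ≤ ∑ m ∈ Finset.Icc 1 n, ((f m - f (m+1)) / (2*η) + η * K / 2) :=
          Finset.sum_le_sum fun m hm => key m (Finset.mem_Icc.mp hm).1
      _ = (∑ m ∈ Finset.Icc 1 n, (f m - f (m+1))) / (2*η) + n * (η * K / 2) := by
          rw [Finset.sum_add_distrib, Finset.sum_const, ← Finset.sum_div, Nat.card_Icc]
          simp [nsmul_eq_mul]
      _ = (f 1 - f (n+1)) / (2*η) + n * (η * K / 2) := by rw [telesc]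
      _ ≤ 1 / (2*η) + η * n * K / 2 := by
          have h1 : (f 1 - f (n+1)) / (2*η) ≤ 1 / (2*η) := by
            exact div_le_div_of_nonneg_right (by linarith) (by positivity)
          linarith [h1]
  refine ⟨part1, fun hη' => ?_⟩
  set s := Real.sqrt ((n : ℝ) * K) with hsdef
  have hnK : (1:ℝ) ≤ (n : ℝ) * K := by
    have hn1 : (1:ℝ) ≤ (n:ℝ) := by exact_mod_cast hn
    have hK1 : (1:ℝ) ≤ K := by
      rw [hKdef]; exact_mod_cast Fintype.card_pos
    nlinarith
  have hs : 0 < s := Real.sqrt_pos.mpr (by linarith)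
  have hs2 : s * s = (n : ℝ) * K := Real.mul_self_sqrt (by linarith)
  have heq : 1 / (2 * η) + η * n * K / 2 = s := by
    rw [hη', hsdef] at *
    have ht : Real.sqrt (n:ℝ) * Real.sqrt K * (Real.sqrt (n:ℝ) * Real.sqrt K) = (n:ℝ) * K := by
      have hsm : Real.sqrt ((n:ℝ) * K) = Real.sqrt (n:ℝ) * Real.sqrt K :=
        Real.sqrt_mul (by positivity) K
      rw [← hsm]
      exact hs2
    field_simp
    linear_combination (-1 : ℝ) * hs2
  calc ∑ m ∈ Finset.Icc 1 n, (U m a - (inner ℝ (x m) (U m) : ℝ))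
      ≤ 1 / (2 * η) + η * n * K / 2 := part1
    _ = s := heq
end

section
/- Define C̃ = {(z, ω) ∈ ℝ^d × [ω₀, ω₁]^{(*)} : z/ω ∈ E} for a closed set E ⊆ ℝ^d and constants 0 < ω₀ ≤ ω₁ ≤ 1. Then for every (z, ω) ∈ ℝ^d × [ω₀, ω₁] with ‖z‖ ≤ ω·‖g‖∞: (i) d_E(z/ω) ≤ (1/ω₀ + ‖g‖∞/ω₀²)·d_{C̃}(z, ω); (ii) d_{C̃}(z, ω) ≤ ω₁·d_E(z/ω), where distances are Euclidean in the appropriate spaces and ‖g‖∞ is a fixed bound on ‖z‖/ω. -/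
open Metric

/-- Distance comparison for the cone-like lift `C̃ = {(z,ω) : ω ∈ [ω₀,ω₁], z/ω ∈ E}` used for
approachability with variable stage durations: for `(z,ω)` with `ω ∈ [ω₀,ω₁]` and
`‖z‖ ≤ ω G`, (i) `d_E(z/ω) ≤ (1/ω₀ + G/ω₀²) d_{C̃}(z,ω)` and (ii) `d_{C̃}(z,ω) ≤ ω₁ d_E(z/ω)`. -/
theorem variable_duration_lift_distances (d : ℕ)
    (E : Set (EuclideanSpace ℝ (Fin d))) (hEclosed : IsClosed E) (hEne : E.Nonempty)
    (ω₀ ω₁ G : ℝ) (h0 : 0 < ω₀) (h01 : ω₀ ≤ ω₁) (h1 : ω₁ ≤ 1) (hG : 0 ≤ G)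
    (Ctilde : Set (WithLp 2 (EuclideanSpace ℝ (Fin d) × ℝ)))
    (hCtilde : Ctilde = {p : WithLp 2 (EuclideanSpace ℝ (Fin d) × ℝ) |
      p.ofLp.2 ∈ Set.Icc ω₀ ω₁ ∧ (p.ofLp.2)⁻¹ • p.ofLp.1 ∈ E}) :
    ∀ p : WithLp 2 (EuclideanSpace ℝ (Fin d) × ℝ),
      p.ofLp.2 ∈ Set.Icc ω₀ ω₁ → ‖p.ofLp.1‖ ≤ p.ofLp.2 * G →
        infDist ((p.ofLp.2)⁻¹ • p.ofLp.1) E ≤ (1 / ω₀ + G / ω₀ ^ 2) * infDist p Ctilde ∧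
          infDist p Ctilde ≤ ω₁ * infDist ((p.ofLp.2)⁻¹ • p.ofLp.1) E := by
  intro p hp hpz
  obtain ⟨hωlo, hωhi⟩ := hp
  have hωpos : 0 < p.ofLp.2 := lt_of_lt_of_le h0 hωlo
  have hω1 : p.ofLp.2 ≤ 1 := le_trans hωhi h1
  -- component distances are bounded by the product distance
  have hfst : ∀ q : WithLp 2 (EuclideanSpace ℝ (Fin d) × ℝ),
      dist p.ofLp.1 q.ofLp.1 ≤ dist p q := by
    intro q
    rw [WithLp.prod_dist_eq_of_L2, ← WithLp.ofLp_fst, ← WithLp.ofLp_fst, ← WithLp.ofLp_snd, ← WithLp.ofLp_snd]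
    calc dist p.ofLp.1 q.ofLp.1 = Real.sqrt (dist p.ofLp.1 q.ofLp.1 ^ 2) := (Real.sqrt_sq dist_nonneg).symm
      _ ≤ _ := Real.sqrt_le_sqrt (by nlinarith [sq_nonneg (dist p.ofLp.2 q.ofLp.2)])
  have hsnd : ∀ q : WithLp 2 (EuclideanSpace ℝ (Fin d) × ℝ),
      dist p.ofLp.2 q.ofLp.2 ≤ dist p q := by
    intro q
    rw [WithLp.prod_dist_eq_of_L2, ← WithLp.ofLp_fst, ← WithLp.ofLp_fst, ← WithLp.ofLp_snd, ← WithLp.ofLp_snd]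
    calc dist p.ofLp.2 q.ofLp.2 = Real.sqrt (dist p.ofLp.2 q.ofLp.2 ^ 2) := (Real.sqrt_sq dist_nonneg).symm
      _ ≤ _ := Real.sqrt_le_sqrt (by nlinarith [sq_nonneg (dist p.ofLp.1 q.ofLp.1)])
  -- Ctilde is nonempty
  obtain ⟨x0, hx0⟩ := hEne
  have hCne : Ctilde.Nonempty := by
    refine ⟨(WithLp.equiv 2 _).symm (ω₀ • x0, ω₀), ?_⟩
    rw [hCtilde]
    refine ⟨⟨le_refl _, h01⟩, ?_⟩
    show ω₀⁻¹ • (ω₀ • x0) ∈ E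
    rw [inv_smul_smul₀ h0.ne']
    exact hx0
  set c : ℝ := 1 / ω₀ + G / ω₀ ^ 2 with hc_def
  have hc : 0 < c := by positivity
  -- key pointwise bound for (i)
  have key : ∀ q ∈ Ctilde, infDist ((p.ofLp.2)⁻¹ • p.ofLp.1) E ≤ c * dist p q := by
    intro q hq
    rw [hCtilde] at hq
    obtain ⟨⟨hqlo, hqhi⟩, hqE⟩ := hq
    have hq2pos : 0 < q.ofLp.2 := lt_of_lt_of_le h0 hqlo
    set y := (q.ofLp.2)⁻¹ • q.ofLp.1 with hy_def
    set D := dist p q with hD_def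
    have hD0 : (0:ℝ) ≤ D := dist_nonneg
    set A := ‖p.ofLp.1 - q.ofLp.1‖ with hA_def
    set B := |p.ofLp.2 - q.ofLp.2| with hB_def
    have hA : A ≤ D := by rw [hA_def, ← dist_eq_norm]; exact hfst q
    have hB : B ≤ D := by
      rw [hB_def, ← Real.dist_eq]; exact hsnd q
    have hdecomp : (p.ofLp.2)⁻¹ • p.ofLp.1 - y =
        (q.ofLp.2)⁻¹ • (p.ofLp.1 - q.ofLp.1) + ((p.ofLp.2)⁻¹ - (q.ofLp.2)⁻¹) • p.ofLp.1 := by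
      rw [hy_def, smul_sub, sub_smul]
      abel
    have habs : |(p.ofLp.2)⁻¹ - (q.ofLp.2)⁻¹| ≤ B / ω₀ ^ 2 := by
      rw [inv_sub_inv hωpos.ne' hq2pos.ne', abs_div]
      refine div_le_div₀ (abs_nonneg _) ?_ (by positivity) ?_
      · rw [abs_sub_comm]
      · rw [abs_of_pos (by positivity)]
        nlinarith
    have hnorm : ‖(p.ofLp.2)⁻¹ • p.ofLp.1 - y‖ ≤ (q.ofLp.2)⁻¹ * A + (B / ω₀ ^ 2) * ‖p.ofLp.1‖ := by
      rw [hdecomp]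
      calc ‖(q.ofLp.2)⁻¹ • (p.ofLp.1 - q.ofLp.1) + ((p.ofLp.2)⁻¹ - (q.ofLp.2)⁻¹) • p.ofLp.1‖
          ≤ ‖(q.ofLp.2)⁻¹ • (p.ofLp.1 - q.ofLp.1)‖ + ‖((p.ofLp.2)⁻¹ - (q.ofLp.2)⁻¹) • p.ofLp.1‖ := norm_add_le _ _
        _ = |(q.ofLp.2)⁻¹| * A + |(p.ofLp.2)⁻¹ - (q.ofLp.2)⁻¹| * ‖p.ofLp.1‖ := by
            rw [norm_smul, norm_smul, Real.norm_eq_abs, Real.norm_eq_abs]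
        _ ≤ (q.ofLp.2)⁻¹ * A + (B / ω₀ ^ 2) * ‖p.ofLp.1‖ := by
            rw [abs_of_pos (inv_pos.2 hq2pos)]
            gcongr
    have hbound : (q.ofLp.2)⁻¹ * A + (B / ω₀ ^ 2) * ‖p.ofLp.1‖ ≤ c * D := by
      have h1' : (q.ofLp.2)⁻¹ * A ≤ (1 / ω₀) * D := by
        have : (q.ofLp.2)⁻¹ ≤ 1 / ω₀ := by
          rw [one_div]
          exact inv_anti₀ h0 hqlo
        exact mul_le_mul this hA (norm_nonneg _) (by positivity)
      have h2' : (B / ω₀ ^ 2) * ‖p.ofLp.1‖ ≤ (G / ω₀ ^ 2) * D := by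
        have hBp : B * ‖p.ofLp.1‖ ≤ G * D := by
          have h3 : ‖p.ofLp.1‖ ≤ G := le_trans hpz (by nlinarith)
          have : B * ‖p.ofLp.1‖ ≤ D * G :=
            mul_le_mul hB h3 (norm_nonneg _) hD0
          linarith [this]
        calc (B / ω₀ ^ 2) * ‖p.ofLp.1‖ = (B * ‖p.ofLp.1‖) / ω₀ ^ 2 := by ring
          _ ≤ (G * D) / ω₀ ^ 2 := by
            apply div_le_div_of_nonneg_right hBp ?_ |>.trans_eq rfl
            · positivity
          _ = (G / ω₀ ^ 2) * D := by ring
      rw [hc_def]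
      calc (q.ofLp.2)⁻¹ * A + (B / ω₀ ^ 2) * ‖p.ofLp.1‖
          ≤ (1 / ω₀) * D + (G / ω₀ ^ 2) * D := add_le_add h1' h2'
        _ = (1 / ω₀ + G / ω₀ ^ 2) * D := by ring
    calc infDist ((p.ofLp.2)⁻¹ • p.ofLp.1) E ≤ dist ((p.ofLp.2)⁻¹ • p.ofLp.1) y :=
          infDist_le_dist_of_mem hqE
      _ = ‖(p.ofLp.2)⁻¹ • p.ofLp.1 - y‖ := by rw [dist_eq_norm]
      _ ≤ (q.ofLp.2)⁻¹ * A + (B / ω₀ ^ 2) * ‖p.ofLp.1‖ := hnorm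
      _ ≤ c * D := hbound
  constructor
  · -- (i)
    by_contra hcon
    push_neg at hcon
    have hlt : infDist p Ctilde < infDist ((p.ofLp.2)⁻¹ • p.ofLp.1) E / c := by
      rw [lt_div_iff₀ hc]
      nlinarith [hcon]
    obtain ⟨q, hqC, hqd⟩ := (infDist_lt_iff hCne).1 hlt
    have h1' := key q hqC
    have h2' : dist p q * c < infDist ((p.ofLp.2)⁻¹ • p.ofLp.1) E := (lt_div_iff₀ hc).1 hqd
    nlinarith
  · -- (ii) : candidate point (ω • Π_E(z/ω), ω)
    obtain ⟨y, hyE, hyd⟩ :=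
      hEclosed.exists_infDist_eq_dist ⟨x0, hx0⟩ ((p.ofLp.2)⁻¹ • p.ofLp.1)
    set q : WithLp 2 (EuclideanSpace ℝ (Fin d) × ℝ) :=
      (WithLp.equiv 2 _).symm (p.ofLp.2 • y, p.ofLp.2) with hq_def
    have hq1 : q.ofLp.1 = p.ofLp.2 • y := rfl
    have hq2 : q.ofLp.2 = p.ofLp.2 := rfl
    have hqC : q ∈ Ctilde := by
      rw [hCtilde]
      refine ⟨⟨hωlo, hωhi⟩, ?_⟩
      show (q.ofLp.2)⁻¹ • q.ofLp.1 ∈ E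
      rw [hq1, hq2, inv_smul_smul₀ hωpos.ne']
      exact hyE
    have hdq : dist p q = p.ofLp.2 * dist ((p.ofLp.2)⁻¹ • p.ofLp.1) y := by
      rw [WithLp.prod_dist_eq_of_L2, ← WithLp.ofLp_fst, ← WithLp.ofLp_fst, ← WithLp.ofLp_snd, ← WithLp.ofLp_snd, hq1, hq2, dist_self]
      rw [dist_eq_norm, dist_eq_norm]
      have : p.ofLp.1 - p.ofLp.2 • y = p.ofLp.2 • ((p.ofLp.2)⁻¹ • p.ofLp.1 - y) := by
        rw [smul_sub, smul_inv_smul₀ hωpos.ne']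
      rw [this, norm_smul, Real.norm_eq_abs, abs_of_pos hωpos]
      rw [zero_pow (by norm_num), add_zero, Real.sqrt_sq (by positivity)]
    calc infDist p Ctilde ≤ dist p q := infDist_le_dist_of_mem hqC
      _ = p.ofLp.2 * dist ((p.ofLp.2)⁻¹ • p.ofLp.1) y := hdq
      _ = p.ofLp.2 * infDist ((p.ofLp.2)⁻¹ • p.ofLp.1) E := by rw [hyd]
      _ ≤ ω₁ * infDist ((p.ofLp.2)⁻¹ • p.ofLp.1) E := by
          apply mul_le_mul_of_nonneg_right hωhi infDist_nonneg
end

section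
/- Let Ω be a finite set of size d+1 and identify Δ(Ω) with the standard simplex in ℝ^d. Fix ε > 0 and let {p[ℓ] : ℓ ∈ L} = {∑_{k=1}^d (2n_k ε/√d)·e_k ∈ Δ(Ω) : n_k ∈ ℕ} be the regular rectangular grid with mesh 2ε/√d, with neighbors p[ℓ_k] = p[ℓ] + (2ε/√d)·e_k. Then for every ℓ ∈ L and every q ∈ ℝ^d of the form q = p[ℓ] + ∑_{k=1}^d x_k e_k with all x_k ≥ ε/√d: ‖q − p[ℓ]‖ − ε ≤ (√d/(4ε))·√(∑_{k=1}^d (‖q − p[ℓ]‖² − ‖q − p[ℓ_k]‖²)²). -/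
lemma euclid_normsq {d : ℕ} (y : EuclideanSpace ℝ (Fin d)) :
    ‖y‖ ^ 2 = ∑ i, y i ^ 2 := by
  rw [EuclideanSpace.norm_eq, Real.sq_sqrt (by positivity)]
  simp [sq_abs]

/-- Key geometric estimate for calibration via internal regret on a regular grid: if
`q = p + ∑_k x_k e_k` with every `x_k ≥ ε/√d`, and `p_k := p + (2ε/√d) e_k` are the neighbors
of `p`, then `‖q − p‖ − ε ≤ (√d/(4ε)) √(∑_k (‖q−p‖² − ‖q−p_k‖²)²)`. -/
theorem grid_calibration_estimate (d : ℕ) (hd : 1 ≤ d) (ε : ℝ) (hε : 0 < ε)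
    (p : EuclideanSpace ℝ (Fin d)) (x : Fin d → ℝ)
    (hx : ∀ k, ε / Real.sqrt d ≤ x k)
    (q : EuclideanSpace ℝ (Fin d)) (hq : ∀ i, q i = p i + x i) :
    ‖q - p‖ - ε ≤ (Real.sqrt d / (4 * ε)) *
      Real.sqrt (∑ k : Fin d,
        (‖q - p‖ ^ 2 -
          ‖q - (p + EuclideanSpace.single k (2 * ε / Real.sqrt d))‖ ^ 2) ^ 2) := by
  have hds : (0:ℝ) < Real.sqrt d := Real.sqrt_pos.2 (by exact_mod_cast hd)
  set c : ℝ := ε / Real.sqrt d with hc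
  have hcpos : 0 < c := div_pos hε hds
  set h : ℝ := 2 * ε / Real.sqrt d with hh
  have hh2 : h = 2 * c := by rw [hh, hc]; ring
  set r : EuclideanSpace ℝ (Fin d) := WithLp.toLp 2 (fun i => x i - c) with hr
  set cv : EuclideanSpace ℝ (Fin d) := WithLp.toLp 2 (fun _ => c) with hcv
  have hqp : q - p = r + cv := by
    ext i
    simp only [PiLp.sub_apply, PiLp.add_apply, hq i]
    show p i + x i - p i = (x i - c) + c
    ring
  have hcvnorm : ‖cv‖ = ε := by
    have h2 : ‖cv‖ ^ 2 = ε ^ 2 := by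
      rw [euclid_normsq]
      show ∑ _i : Fin d, c ^ 2 = ε ^ 2
      rw [Finset.sum_const, Finset.card_univ, Fintype.card_fin, nsmul_eq_mul, hc,
        div_pow, Real.sq_sqrt (by positivity)]
      field_simp
    have hn : 0 ≤ ‖cv‖ := norm_nonneg _
    nlinarith [h2, hn, hε.le]
  have hsum : ∀ k : Fin d,
      ‖q - p‖ ^ 2 - ‖q - (p + EuclideanSpace.single k h)‖ ^ 2 = 2 * h * r k := by
    intro k
    have e1 : ‖q - p‖ ^ 2 = ∑ i, x i ^ 2 := by
      rw [euclid_normsq]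
      exact Finset.sum_congr rfl fun i _ => by simp [hq i]
    have e2 : ‖q - (p + EuclideanSpace.single k h)‖ ^ 2
        = ∑ i, (x i - if i = k then h else 0) ^ 2 := by
      rw [euclid_normsq]
      refine Finset.sum_congr rfl fun i _ => ?_
      simp only [PiLp.sub_apply, PiLp.add_apply, EuclideanSpace.single_apply, hq i]
      ring
    rw [e1, e2, ← Finset.sum_sub_distrib]
    have key : ∀ i ∈ Finset.univ, x i ^ 2 - (x i - if i = k then h else 0) ^ 2
        = if i = k then 2 * h * x k - h ^ 2 else 0 := by
      intro i _
      by_cases hik : i = k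
      · subst hik; rw [if_pos rfl, if_pos rfl]; ring
      · simp [hik]
    rw [Finset.sum_congr rfl key, Finset.sum_ite_eq' Finset.univ k]
    simp only [Finset.mem_univ, if_pos]
    show 2 * h * x k - h ^ 2 = 2 * h * (x k - c)
    rw [hh2]; ring
  have hS : ∑ k : Fin d, (‖q - p‖ ^ 2 - ‖q - (p + EuclideanSpace.single k h)‖ ^ 2) ^ 2
      = 4 * h ^ 2 * ‖r‖ ^ 2 := by
    rw [Finset.sum_congr rfl fun k _ => by rw [hsum k], euclid_normsq, Finset.mul_sum]
    exact Finset.sum_congr rfl fun k _ => by ring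
  have hhpos : 0 < h := by rw [hh2]; linarith
  have hSqrt : Real.sqrt (4 * h ^ 2 * ‖r‖ ^ 2) = 2 * h * ‖r‖ := by
    rw [show 4 * h ^ 2 * ‖r‖ ^ 2 = (2 * h * ‖r‖) ^ 2 by ring]
    exact Real.sqrt_sq (by positivity)
  have hRHS : Real.sqrt d / (4 * ε) * (2 * h * ‖r‖) = ‖r‖ := by
    rw [hh]
    field_simp
    ring
  calc ‖q - p‖ - ε ≤ (‖r‖ + ‖cv‖) - ε := by
        rw [hqp]; linarith [norm_add_le r cv]
    _ = ‖r‖ := by rw [hcvnorm]; ring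
    _ = Real.sqrt d / (4 * ε) * Real.sqrt (∑ k : Fin d,
        (‖q - p‖ ^ 2 - ‖q - (p + EuclideanSpace.single k h)‖ ^ 2) ^ 2) := by
        rw [hS, hSqrt, hRHS]
end

section
/- Let A, B be finite sets and g : Δ(A) × Δ(B) → ℝ^d bilinear. A closed convex set C ⊆ ℝ^d satisfying 'for every y ∈ Δ(B) there exists x ∈ Δ(A) with g(x,y) ∈ C' is a B-set: for every z ∈ ℝ^d there exist π ∈ C with ‖z − π‖ = d_C(z) and x ∈ Δ(A) such that ⟨g(x,y) − π, z − π⟩ ≤ 0 for all y ∈ Δ(B). -/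
open Metric

/-- Blackwell's characterization: a closed convex set `C` satisfying the dual condition
"for every `y ∈ Δ(B)` there is `x ∈ Δ(A)` with `g(x,y) ∈ C`" is a B-set: for every `z` there
exist a projection `π ∈ C` with `‖z − π‖ = d_C(z)` and a mixed action `x ∈ Δ(A)` such that
`⟨g(x,y) − π, z − π⟩ ≤ 0` for all `y ∈ Δ(B)`. -/
theorem convex_blackwell_condition_is_Bset {A B : Type*} [Fintype A] [Fintype B]
    [Nonempty A] [Nonempty B] (d : ℕ)
    (g : A → B → EuclideanSpace ℝ (Fin d))
    (G : (A → ℝ) → (B → ℝ) → EuclideanSpace ℝ (Fin d))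
    (hG : ∀ x y, G x y = ∑ a, ∑ b, (x a * y b) • g a b)
    (ΔA : Set (A → ℝ)) (hΔA : ΔA = {x | (∀ a, 0 ≤ x a) ∧ ∑ a, x a = 1})
    (ΔB : Set (B → ℝ)) (hΔB : ΔB = {y | (∀ b, 0 ≤ y b) ∧ ∑ b, y b = 1})
    (C : Set (EuclideanSpace ℝ (Fin d))) (hCclosed : IsClosed C) (hCconv : Convex ℝ C)
    (hBlackwell : ∀ y ∈ ΔB, ∃ x ∈ ΔA, G x y ∈ C) :
    ∀ z : EuclideanSpace ℝ (Fin d),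
      ∃ π ∈ C, ‖z - π‖ = infDist z C ∧
        ∃ x ∈ ΔA, ∀ y ∈ ΔB, (inner ℝ (G x y - π) (z - π) : ℝ) ≤ 0 := by
  classical
  intro z
  -- C is nonempty
  obtain ⟨b0⟩ := ‹Nonempty B›
  have hy0 : (fun b => if b = b0 then (1:ℝ) else 0) ∈ ΔB := by
    rw [hΔB]
    refine ⟨fun b => by positivity, ?_⟩
    simp
  obtain ⟨x0, hx0, hGx0⟩ := hBlackwell _ hy0
  have hCne : C.Nonempty := ⟨_, hGx0⟩
  obtain ⟨π, hπC, hπd⟩ := hCclosed.exists_infDist_eq_dist hCne z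
  have hdist : ‖z - π‖ = infDist z C := by rw [hπd, dist_eq_norm]
  -- normal cone property of the projection
  have hnormal : ∀ c ∈ C, (inner ℝ (z - π) (c - π) : ℝ) ≤ 0 := by
    rw [← norm_eq_iInf_iff_real_inner_le_zero hCconv hπC]
    rw [hdist, infDist_eq_iInf]
    simp_rw [dist_eq_norm]
  refine ⟨π, hπC, hdist, ?_⟩
  -- the payoff matrix of the auxiliary game
  set v : A → B → ℝ := fun a b => inner ℝ (g a b - π) (z - π) with hv
  -- key computation: inner ℝ (G x y - π) (z - π) as a weighted sum
  have hinner : ∀ x ∈ ΔA, ∀ y ∈ ΔB,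
      (inner ℝ (G x y - π) (z - π) : ℝ) = ∑ b, y b * ∑ a, x a * v a b := by
    intro x hx y hy
    rw [hΔA] at hx; rw [hΔB] at hy
    have hxy : ∑ a, ∑ b, x a * y b = 1 := by
      rw [← hx.2]
      refine Finset.sum_congr rfl fun a _ => ?_
      rw [← Finset.mul_sum, hy.2, mul_one]
    have hGsub : G x y - π = ∑ a, ∑ b, (x a * y b) • (g a b - π) := by
      simp only [smul_sub, Finset.sum_sub_distrib, ← Finset.sum_smul, hxy, one_smul, hG]
    rw [hGsub, sum_inner]
    have : ∀ a, (inner ℝ (∑ b, (x a * y b) • (g a b - π)) (z - π) : ℝ)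
        = ∑ b, x a * y b * v a b := by
      intro a
      rw [sum_inner]
      exact Finset.sum_congr rfl fun b _ => real_inner_smul_left _ _ _
    simp_rw [this]
    rw [Finset.sum_comm]
    refine Finset.sum_congr rfl fun b _ => ?_
    rw [Finset.mul_sum]
    refine Finset.sum_congr rfl fun a _ => by ring
  -- linear map sending mixed actions to their payoff vector
  let T : (A → ℝ) →ₗ[ℝ] (B → ℝ) :=
    { toFun := fun x b => ∑ a, x a * v a b
      map_add' := by
        intro x y; ext b
        simp [add_mul, Finset.sum_add_distrib]
      map_smul' := by
        intro c x; ext b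
        simp [Finset.mul_sum, mul_assoc] }
  have hΔAeq : ΔA = stdSimplex ℝ A := by rw [hΔA]; rfl
  have hK : IsCompact (T '' ΔA) := by
    rw [hΔAeq]
    exact (isCompact_stdSimplex ℝ A).image (LinearMap.continuous_of_finiteDimensional T)
  have hKconv : Convex ℝ (T '' ΔA) := by
    rw [hΔAeq]
    exact (convex_stdSimplex ℝ A).linear_image T
  -- nonpositive orthant
  set N : Set (B → ℝ) := {u | ∀ b, u b ≤ 0} with hN
  have hNclosed : IsClosed N := by
    have : N = ⋂ b, {u : B → ℝ | u b ≤ 0} := by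
      ext u; simp [hN, Set.mem_iInter]
    rw [this]
    exact isClosed_iInter fun b => isClosed_le (continuous_apply b) continuous_const
  have hNconv : Convex ℝ N := by
    intro u hu w hw s t hs ht _
    intro b
    have h1 : s * u b ≤ 0 := mul_nonpos_of_nonneg_of_nonpos hs (hu b)
    have h2 : t * w b ≤ 0 := mul_nonpos_of_nonneg_of_nonpos ht (hw b)
    simp only [Pi.add_apply, Pi.smul_apply, smul_eq_mul]
    linarith
  -- claim: T '' ΔA meets N
  have hmeet : ∃ x ∈ ΔA, ∀ b, T x b ≤ 0 := by
    by_contra hcon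
    push_neg at hcon
    have hdisj : Disjoint (T '' ΔA) N := by
      rw [Set.disjoint_left]
      rintro u ⟨x, hx, rfl⟩ huN
      obtain ⟨b, hb⟩ := hcon x hx
      exact absurd (huN b) (not_le.mpr hb)
    obtain ⟨f, u, s, hfu, hus, hsf⟩ :=
      geometric_hahn_banach_compact_closed hKconv hK hNconv hNclosed hdisj
    -- 0 ∈ N, so s < 0
    have h0N : (0 : B → ℝ) ∈ N := fun b => le_refl 0
    have hs0 : s < 0 := by have := hsf 0 h0N; simpa using this
    have hu0 : u < 0 := lt_trans hus hs0
    -- f is nonnegative on N (a cone)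
    have hfN : ∀ n ∈ N, 0 ≤ f n := by
      intro n hn
      by_contra hneg
      push_neg at hneg
      obtain ⟨t, ht⟩ := exists_nat_gt (s / f n)
      have ht0 : (0:ℝ) < (t + 1 : ℕ) := by positivity
      have htn : ((t + 1 : ℕ) : ℝ) • n ∈ N := by
        intro b
        exact mul_nonpos_of_nonneg_of_nonpos (le_of_lt ht0) (hn b)
      have := hsf _ htn
      rw [map_smul, smul_eq_mul] at this
      have hst : s / f n < ((t + 1 : ℕ) : ℝ) := by
        push_cast; linarith
      have : s < ((t + 1 : ℕ) : ℝ) * f n := this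
      rw [div_lt_iff_of_neg hneg] at hst
      linarith
    -- the separating weights
    set w : B → ℝ := fun b => -f (fun j => if b = j then 1 else 0) with hw
    have hwnn : ∀ b, 0 ≤ w b := by
      intro b
      have : (fun j => if b = j then (-1:ℝ) else 0) ∈ N := by
        intro j; dsimp; split <;> norm_num
      have h := hfN _ this
      have heq : (fun j => if b = j then (-1:ℝ) else 0)
          = -(fun j => if b = j then (1:ℝ) else 0) := by
        ext j; dsimp; split <;> norm_num
      rw [heq, map_neg] at h
      simpa [hw] using h
    have hfp : ∀ p : B → ℝ, f p = -∑ b, p b * w b := by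
      intro p
      conv_lhs => rw [pi_eq_sum_univ p]
      rw [map_sum, ← Finset.sum_neg_distrib]
      refine Finset.sum_congr rfl fun b _ => ?_
      rw [map_smul, smul_eq_mul, hw]
      ring
    -- w is not zero, so it normalizes to a point of ΔB
    have hSpos : 0 < ∑ b, w b := by
      rcases (Finset.sum_nonneg fun b _ => hwnn b).lt_or_eq with h | h
      · exact h
      · exfalso
        have hwz : ∀ b, w b = 0 := by
          intro b
          have := (Finset.sum_eq_zero_iff_of_nonneg fun b _ => hwnn b).mp h.symm
          exact this b (Finset.mem_univ b)
        have : f (T x0) = 0 := by rw [hfp]; simp [hwz]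
        have := hfu (T x0) ⟨x0, hx0, rfl⟩
        linarith
    set y : B → ℝ := fun b => w b / ∑ b', w b' with hy
    have hyΔB : y ∈ ΔB := by
      rw [hΔB]
      refine ⟨fun b => div_nonneg (hwnn b) hSpos.le, ?_⟩
      rw [← Finset.sum_div, div_self hSpos.ne']
    obtain ⟨x, hxΔA, hxC⟩ := hBlackwell y hyΔB
    -- projection inequality gives a contradiction
    have hle : (inner ℝ (G x y - π) (z - π) : ℝ) ≤ 0 := by
      rw [real_inner_comm]
      exact hnormal _ hxC
    rw [hinner x hxΔA y hyΔB] at hle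
    have hTx : f (T x) < u := hfu (T x) ⟨x, hxΔA, rfl⟩
    rw [hfp] at hTx
    have hpos : 0 < ∑ b, T x b * w b := by linarith
    have : ∑ b, y b * ∑ a, x a * v a b = (∑ b, T x b * w b) / ∑ b', w b' := by
      rw [Finset.sum_div]
      refine Finset.sum_congr rfl fun b _ => ?_
      have : T x b = ∑ a, x a * v a b := rfl
      rw [hy]
      dsimp
      rw [← this]
      ring
    rw [this] at hle
    have := div_pos hpos hSpos
    linarith
  -- conclude
  obtain ⟨x, hxΔA, hxle⟩ := hmeet
  refine ⟨x, hxΔA, fun y hy => ?_⟩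
  rw [hinner x hxΔA y hy]
  have hy' := hy; rw [hΔB] at hy'
  refine Finset.sum_nonpos fun b _ => ?_
  exact mul_nonpos_of_nonneg_of_nonpos (hy'.1 b) (hxle b)
end
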